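/- arXiv:2408.09633 — 4 statements merged into one kernel-verified Lean document; each statement's English description precedes it below -/
import Mathlib

section
/- Let A be an abelian category and B ⊆ A a full subcategory closed under isomorphisms, subobjects, quotient objects and finite products. Assume every object of A is noetherian and every object of A admits a finite B-filtration. Then every nonzero object M of A has a unique maximal nonzero subobject lying in B; that is, there exists a subobject m(M) ≤ M with m(M) ∈ B and m(M) ≠ 0 such that every subobject of M lying in B is contained in m(M). -/
open CategoryTheory CategoryTheory.Limits Opposite ZeroObject

universe v u

/-- An abelian category with duality: an exact functor `D : Aᵒᵖ ⥤ A` (exact = preserves finite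
limits and finite colimits) together with a double-dual identification `ϖ : 𝟭 A ≅ D.rightOp ⋙ D`
satisfying the coherence condition `(ϖ_M)^∨ ∘ ϖ_{M^∨} = id_{M^∨}`. -/
structure CategoryWithDuality (A : Type u) [Category.{v} A] [Abelian A] where
  D : Aᵒᵖ ⥤ A
  [exactLim : PreservesFiniteLimits D]
  [exactColim : PreservesFiniteColimits D]
  ϖ : 𝟭 A ≅ D.rightOp ⋙ D
  coherence : ∀ M : A,
    ϖ.hom.app (D.obj (op M)) ≫ D.map (ϖ.hom.app M).op = 𝟙 (D.obj (op M))

namespace CategoryWithDuality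

variable {A : Type u} [Category.{v} A] [Abelian A] (dd : CategoryWithDuality A)

/-- The dual object `M^∨`. -/
def dual (M : A) : A := dd.D.obj (op M)

/-- The dual morphism `f^∨`. -/
def dualMap {M N : A} (f : M ⟶ N) : dd.dual N ⟶ dd.dual M := dd.D.map f.op

/-- The double-dual identification `ϖ_M : M ⟶ M^∨∨`. -/
def ddualApp (M : A) : M ⟶ dd.dual (dd.dual M) := dd.ϖ.hom.app M

/-- A form `φ : M ⟶ M^∨` makes `(M, φ)` a hermitian space for the sign `ε` (`ε = 1` for the
duality `(∨, ϖ)`, `ε = -1` for `(∨, -ϖ)`) if `φ` is an isomorphism and `φ = ε • (φ^∨ ∘ ϖ_M)`. -/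
def IsHermitian (ε : ℤ) {M : A} (φ : M ⟶ dd.dual M) : Prop :=
  IsIso φ ∧ φ = ε • (dd.ddualApp M ≫ dd.dualMap φ)

/-- The orthogonal complement `L^⊥ = ker (i^∨ ∘ φ : M ⟶ L^∨)` of a subobject `L ≤ M` with
respect to a form `φ : M ⟶ M^∨`. -/
noncomputable def ortho {M : A} (φ : M ⟶ dd.dual M) (L : Subobject M) : Subobject M :=
  kernelSubobject (φ ≫ dd.dualMap L.arrow)

/-- A subobject `L` of `(M, φ)` is totally isotropic if `L ≤ L^⊥`. -/
def TotallyIsotropic {M : A} (φ : M ⟶ dd.dual M) (L : Subobject M) : Prop :=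
  L ≤ dd.ortho φ L

end CategoryWithDuality

/-- `1/2 ∈ A`: multiplication by 2 is surjective on every Hom-group of `A`. -/
def HasHalf (A : Type u) [Category.{v} A] [Abelian A] : Prop :=
  ∀ (X Y : A) (f : X ⟶ Y), ∃ g : X ⟶ Y, g + g = f

/-- `N` admits a finite `B`-filtration: a finite chain of subobjects
`0 = N₀ ≤ N₁ ≤ ⋯ ≤ N_r = N` all of whose successive quotients `N_i/N_{i-1}` lie in `B`. -/
def HasBFiltration {A : Type u} [Category.{v} A] [Abelian A] (B : A → Prop) (N : A) : Prop :=
  ∃ (r : ℕ) (c : ℕ → Subobject N) (hc : Monotone c),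
    c 0 = ⊥ ∧ c r = ⊤ ∧
      ∀ i < r, B (cokernel (Subobject.ofLE (c i) (c (i + 1)) (hc (Nat.le_succ i))))

/-- The (full) subcategory of `A` given by the predicate `B` is closed under isomorphisms,
subobjects, quotient objects, finite products (including the empty product `0`) and
the duality. -/
structure IsDevissageSubcat {A : Type u} [Category.{v} A] [Abelian A]
    (dd : CategoryWithDuality A) (B : A → Prop) : Prop where
  iso_closed : ∀ {X Y : A}, (X ≅ Y) → B X → B Y
  sub_closed : ∀ {X Y : A} (f : X ⟶ Y), Mono f → B Y → B X
  quot_closed : ∀ {X Y : A} (f : X ⟶ Y), Epi f → B X → B Y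
  zero_mem : B 0
  prod_closed : ∀ {X Y : A}, B X → B Y → B (X ⊞ Y)
  dual_closed : ∀ {X : A}, B X → B (dd.dual X)

-- auxiliary lemmas
section Aux

variable {A : Type u} [Category.{v} A] [Abelian A]

/-- The sup of two subobjects is a quotient of their biproduct, so membership in a
subcategory closed under quotients and biproducts is preserved by `⊔`. -/
theorem B_sup_closed (B : A → Prop)
    (iso_closed : ∀ {X Y : A}, (X ≅ Y) → B X → B Y)
    (quot_closed : ∀ {X Y : A} (f : X ⟶ Y), Epi f → B X → B Y)
    (prod_closed : ∀ {X Y : A}, B X → B Y → B (X ⊞ Y))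
    {M : A} (L₁ L₂ : Subobject M) (h₁ : B ((L₁ : A))) (h₂ : B ((L₂ : A))) :
    B (((L₁ ⊔ L₂ : Subobject M) : A)) := by
  set f : (L₁ : A) ⊞ (L₂ : A) ⟶ M := biprod.desc L₁.arrow L₂.arrow with hf
  have key : L₁ ⊔ L₂ = Subobject.mk (image.ι f) := by
    apply le_antisymm
    · apply sup_le
      · exact Subobject.le_mk_of_comm (biprod.inl ≫ factorThruImage f)
          (by simp [hf])
      · exact Subobject.le_mk_of_comm (biprod.inr ≫ factorThruImage f)
          (by simp [hf])
    · refine Subobject.mk_le_of_comm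
        (image.lift ⟨((L₁ ⊔ L₂ : Subobject M) : A), (L₁ ⊔ L₂).arrow,
          biprod.desc (Subobject.ofLE _ _ le_sup_left) (Subobject.ofLE _ _ le_sup_right), ?_⟩)
        (image.lift_fac _)
      apply biprod.hom_ext' <;> simp [hf]
  have hB : B (image f) :=
    quot_closed (factorThruImage f) inferInstance (prod_closed h₁ h₂)
  have := iso_closed (Subobject.underlyingIso (image.ι f)).symm hB
  exact iso_closed (eqToIso (congrArg Subobject.underlying.obj key)).symm this

end Aux

/-- **Existence of the unique maximal `B`-subobject.**
If `A` is an abelian category and `B ⊆ A` is a full subcategory closed under isomorphisms,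
subobjects, quotient objects and finite products, such that every object of `A` is noetherian
and admits a finite `B`-filtration, then every nonzero object `M` of `A` has a unique maximal
nonzero subobject lying in `B`: there is a subobject `m ≤ M` with underlying object in `B`,
`m ≠ 0`, and such that every subobject of `M` lying in `B` is contained in `m`. -/
theorem exists_maximal_B_subobject
    (A : Type u) [Category.{v} A] [Abelian A]
    (B : A → Prop)
    (iso_closed : ∀ {X Y : A}, (X ≅ Y) → B X → B Y)
    (sub_closed : ∀ {X Y : A} (f : X ⟶ Y), Mono f → B Y → B X)
    (quot_closed : ∀ {X Y : A} (f : X ⟶ Y), Epi f → B X → B Y)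
    (zero_mem : B 0)
    (prod_closed : ∀ {X Y : A}, B X → B Y → B (X ⊞ Y))
    (hnoeth : ∀ M : A, CategoryTheory.IsNoetherianObject M)
    (hfil : ∀ M : A, HasBFiltration B M)
    (M : A) (hM : ¬ IsZero M) :
    ∃ m : Subobject M, B ((m : A)) ∧ m ≠ ⊥ ∧
      ∀ L : Subobject M, B ((L : A)) → L ≤ m := by
  -- find a nonzero subobject in B from the filtration
  have topne : (⊤ : Subobject M) ≠ ⊥ := by
    intro h
    exact hM ((isZero_zero A).of_iso
      ((asIso (⊤ : Subobject M).arrow).symm ≪≫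
        eqToIso (congrArg (fun L : Subobject M => (L : A)) h) ≪≫ Subobject.botCoeIsoZero))
  obtain ⟨r, c, hc, hc0, hcr, hB⟩ := hfil M
  have hex : ∃ i, c i ≠ ⊥ := ⟨r, by rw [hcr]; exact topne⟩
  classical
  set k := Nat.find hex with hk
  have hkne : c k ≠ ⊥ := Nat.find_spec hex
  have hkpos : k ≠ 0 := by
    intro h; apply hkne; rw [h, hc0]
  obtain ⟨j, hkj⟩ : ∃ j, k = j + 1 := ⟨k - 1, (Nat.succ_pred_eq_of_pos (Nat.pos_of_ne_zero hkpos)).symm⟩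
  rw [hkj] at hkne
  have hcj : c j = ⊥ := by
    by_contra h
    have : Nat.find hex ≤ j := Nat.find_le h
    omega
  have hjr : j < r := by
    by_contra h
    apply topne
    rw [← hcr]
    have : c r ≤ c j := hc (by omega)
    rw [hcj] at this
    exact le_bot_iff.mp this
  -- the first step of the filtration is a nonzero B-subobject
  have hzero : IsZero ((c j : A)) := by
    rw [hcj]; exact (isZero_zero A).of_iso Subobject.botCoeIsoZero
  have hofle : Subobject.ofLE (c j) (c (j + 1)) (hc (Nat.le_succ j)) = 0 :=
    hzero.eq_zero_of_src _
  have hL0 : B ((c (j + 1) : A)) := by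
    have := hB j hjr
    exact iso_closed (cokernelIsoOfEq hofle ≪≫ cokernelZeroIsoTarget) this
  -- take a maximal element of the set of B-subobjects
  have wf : WellFounded ((· > ·) : Subobject M → Subobject M → Prop) :=
    by haveI := hnoeth M; exact wellFounded_gt
  obtain ⟨m, hmB, hmax⟩ := wf.has_min {L : Subobject M | B ((L : A))} ⟨c (j + 1), hL0⟩
  have hall : ∀ L : Subobject M, B ((L : A)) → L ≤ m := by
    intro L hL
    have hsup : B (((m ⊔ L : Subobject M) : A)) :=
      B_sup_closed B @iso_closed @quot_closed @prod_closed m L hmB hL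
    have := hmax _ hsup
    have heq : m ⊔ L = m := by
      by_contra h
      exact this (lt_of_le_of_ne le_sup_left (Ne.symm h))
    calc L ≤ m ⊔ L := le_sup_right
      _ = m := heq
  refine ⟨m, hmB, ?_, hall⟩
  intro h
  apply hkne
  rw [h] at hall
  exact le_bot_iff.mp (hall _ hL0)
end

section
/- Let (A, ∨, ϖ) be a small abelian category with duality in which 1/2 ∈ A, and let B ⊆ A be a full subcategory closed under isomorphisms, subobjects, quotient objects, finite products, and the duality. Assume every object of A is noetherian and every object of A admits a finite B-filtration. For a hermitian space (M, φ) in A, let m(M) denote the maximal subobject of M lying in B (with m(0) = 0), and set s(M) := m(M) ⊓ m(M)^⊥. Then s(M) = 0 if and only if M lies in B. -/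
open CategoryTheory CategoryTheory.Limits Opposite ZeroObject

universe v u

section AuxDevissage

variable {C : Type u} [Category.{v} C] [Abelian C]

/-- A subobject whose underlying object is zero is `⊥`. -/
lemma subobject_eq_bot_of_isZero {N : C} (X : Subobject N) (h : IsZero ((X : C))) : X = ⊥ :=
  le_bot_iff.mp <| Subobject.le_of_comm (h.to_ _) (h.eq_of_src _ _)

/-- The underlying object of `⊥` is zero. -/
lemma isZero_bot_coe (N : C) : IsZero (((⊥ : Subobject N) : C)) :=
  (isZero_zero C).of_iso Subobject.botCoeIsoZero

/-- A nonzero object with a `B`-filtration, for `B` closed under isos, has a nonzero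
subobject lying in `B`. -/
lemma exists_nonbot_subobject_of_filtration {B : C → Prop}
    (hiso : ∀ {X Y : C}, (X ≅ Y) → B X → B Y)
    {N : C} (hN : ¬ IsZero N) (hfil : HasBFiltration B N) :
    ∃ X : Subobject N, X ≠ ⊥ ∧ B ((X : C)) := by
  obtain ⟨r, c, hc, h0, hr, hq⟩ := hfil
  classical
  haveI : Nontrivial (Subobject N) := Subobject.nontrivial_of_not_isZero hN
  have hne : ∃ j, c j ≠ ⊥ := ⟨r, by rw [hr]; exact bot_ne_top.symm⟩
  have hk : c (Nat.find hne) ≠ ⊥ := Nat.find_spec hne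
  have hk0 : Nat.find hne ≠ 0 := fun h => hk (by rw [h, h0])
  obtain ⟨i, hik⟩ : ∃ i, Nat.find hne = i + 1 :=
    ⟨Nat.find hne - 1, (Nat.succ_pred_eq_of_pos (Nat.pos_of_ne_zero hk0)).symm⟩
  rw [hik] at hk
  have hci : c i = ⊥ := by
    by_contra hbot
    exact Nat.find_min hne (by omega) hbot
  have hkr : i + 1 ≤ r :=
    hik ▸ Nat.find_min' hne (show c r ≠ ⊥ from by rw [hr]; exact bot_ne_top.symm)
  have hz : IsZero ((c i : C)) :=
    (isZero_bot_coe N).of_iso (Subobject.isoOfEq _ _ hci)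
  have hB := hq i (by omega)
  have hzero : Subobject.ofLE (c i) (c (i + 1)) (hc (Nat.le_succ i)) = 0 := hz.eq_of_src _ _
  exact ⟨c (i + 1), hk, hiso (cokernelIsoOfEq hzero ≪≫ cokernelZeroIsoTarget) hB⟩

end AuxDevissage


/-- **Vanishing of the socle `s(M) = m(M) ⊓ m(M)^⊥` detects membership in `B`.**
Under the dévissage setup (small abelian category with duality, `1/2 ∈ A`, `B` closed under
isomorphisms, subobjects, quotients, finite products and duality, all objects noetherian and
`B`-filtered), if `(M, φ)` is a hermitian space and `m` is the maximal subobject of `M` lying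
in `B` (characterized by: `m ∈ B` and every subobject of `M` lying in `B` is `≤ m`; for
`M = 0` this forces `m = 0`), then `m ⊓ m^⊥ = 0` if and only if `M` lies in `B`. -/

theorem socle_eq_bot_iff_mem
    (A : Type u) [SmallCategory A] [Abelian A]
    (dd : CategoryWithDuality A)
    (hhalf : HasHalf A)
    (B : A → Prop) (hB : IsDevissageSubcat dd B)
    (hnoeth : ∀ M : A, CategoryTheory.IsNoetherianObject M)
    (hfil : ∀ M : A, HasBFiltration B M)
    (M : A) (φ : M ⟶ dd.dual M) (hφ : dd.IsHermitian 1 φ)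
    (m : Subobject M) (hmB : B ((m : A)))
    (hmax : ∀ L : Subobject M, B ((L : A)) → L ≤ m) :
    m ⊓ dd.ortho φ m = ⊥ ↔ B M := by
  constructor
  · intro hs
    -- First show `m^⊥ = ⊥`.
    have horth : dd.ortho φ m = ⊥ := by
      by_contra hne
      have hNz : ¬ IsZero ((dd.ortho φ m : A)) := fun h =>
        hne (subobject_eq_bot_of_isZero _ h)
      obtain ⟨X, hX, hXB⟩ :=
        exists_nonbot_subobject_of_filtration (fun e => hB.iso_closed e) hNz
          (hfil ((dd.ortho φ m : A)))
      -- Push `X` forward to a subobject of `M`.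
      let f : (X : A) ⟶ M := X.arrow ≫ (dd.ortho φ m).arrow
      haveI : Mono f := mono_comp _ _
      have hLB : B ((Subobject.mk f : A)) :=
        hB.iso_closed (Subobject.underlyingIso f).symm hXB
      have hLm : Subobject.mk f ≤ m := hmax _ hLB
      have hLo : Subobject.mk f ≤ dd.ortho φ m := Subobject.mk_le_of_comm X.arrow rfl
      have : Subobject.mk f = ⊥ := le_bot_iff.mp (hs ▸ le_inf hLm hLo)
      exact hX (subobject_eq_bot_of_isZero X
        ((isZero_bot_coe M).of_iso ((Subobject.underlyingIso f).symm ≪≫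
          Subobject.isoOfEq _ _ this)))
    -- `m^⊥ = ⊥` means `φ ≫ m.arrow^∨` is a mono `M ⟶ m^∨`.
    have hmono : Mono (φ ≫ dd.dualMap m.arrow) := by
      apply Preadditive.mono_of_kernel_iso_zero
      exact (kernelSubobjectIso _).symm ≪≫ Subobject.isoOfEq _ _ horth ≪≫
        Subobject.botCoeIsoZero
    exact hB.sub_closed _ hmono (hB.dual_closed hmB)
  · intro hMB
    have hm : m = ⊤ := le_antisymm le_top
      (hmax ⊤ (hB.iso_closed (asIso (⊤ : Subobject M).arrow).symm hMB))
    subst hm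
    haveI := hφ.1
    haveI : IsIso (φ ≫ dd.dualMap (⊤ : Subobject M).arrow) := by
      unfold CategoryWithDuality.dualMap
      haveI : IsIso (dd.D.map (⊤ : Subobject M).arrow.op) := Functor.map_isIso _ _
      exact IsIso.comp_isIso' hφ.1 this
    have : dd.ortho φ ⊤ = ⊥ :=
      subobject_eq_bot_of_isZero _
        ((isZero_zero A).of_iso (kernelSubobjectIso _ ≪≫ kernel.ofMono _))
    rw [this, inf_bot_eq]
end

section
/- Let (A, ∨, ϖ) be an abelian category with duality and (M, φ) a hermitian space in A. For any subobjects K ≤ L of M, one has L^⊥ ≤ K^⊥, and there is an isomorphism K^⊥/L^⊥ ≅ (L/K)^∨. -/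
open CategoryTheory CategoryTheory.Limits Opposite ZeroObject

universe v u

/-- **Orthogonal complements of nested subobjects.**
Let `(A, ∨, ϖ)` be an abelian category with duality and `(M, φ)` a hermitian space in `A`.
For subobjects `K ≤ L` of `M` one has `L^⊥ ≤ K^⊥`, and `K^⊥/L^⊥ ≅ (L/K)^∨`. -/
theorem ortho_antitone_and_quotient_iso
    (A : Type u) [Category.{v} A] [Abelian A]
    (dd : CategoryWithDuality A)
    (M : A) (φ : M ⟶ dd.dual M) (hφ : dd.IsHermitian 1 φ)
    (K L : Subobject M) (h : K ≤ L) :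
    ∃ h' : dd.ortho φ L ≤ dd.ortho φ K,
      Nonempty (cokernel (Subobject.ofLE (dd.ortho φ L) (dd.ortho φ K) h') ≅
        dd.dual (cokernel (Subobject.ofLE K L h))) := by
  haveI := dd.exactLim
  haveI := dd.exactColim
  haveI : IsIso φ := hφ.1
  set j := Subobject.ofLE K L h with hjdef
  set f := φ ≫ dd.dualMap L.arrow with hfdef
  -- the key factorisation `g = f ≫ j^∨`
  have hg : φ ≫ dd.dualMap K.arrow = f ≫ dd.dualMap j := by
    have harr : K.arrow = j ≫ L.arrow := (Subobject.ofLE_arrow h).symm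
    rw [harr]
    simp only [CategoryWithDuality.dualMap, op_comp, Functor.map_comp, hfdef, Category.assoc]
    exact (Category.assoc _ _ _).symm
  -- antitonicity
  have h' : dd.ortho φ L ≤ dd.ortho φ K := by
    refine le_kernelSubobject _ _ ?_
    rw [hg, ← Category.assoc]
    have : (dd.ortho φ L).arrow ≫ f = 0 := kernelSubobject_arrow_comp f
    rw [this, zero_comp]
  refine ⟨h', ⟨?_⟩⟩
  -- the map `u : K^⊥ ⟶ ker(j^∨)`
  have hcond : ((dd.ortho φ K).arrow ≫ f) ≫ dd.dualMap j = 0 := by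
    rw [Category.assoc, ← hg]
    exact kernelSubobject_arrow_comp _
  set u : ((dd.ortho φ K) : A) ⟶ kernel (dd.dualMap j) :=
    kernel.lift _ ((dd.ortho φ K).arrow ≫ f) hcond with hudef
  have hu : u ≫ kernel.ι (dd.dualMap j) = (dd.ortho φ K).arrow ≫ f :=
    kernel.lift_ι _ _ _
  have keyK : ∀ {W : A} (w : W ⟶ M) (hw : w ≫ (φ ≫ dd.dualMap K.arrow) = 0),
      factorThruKernelSubobject (φ ≫ dd.dualMap K.arrow) w hw ≫ (dd.ortho φ K).arrow = w :=
    fun w hw => factorThruKernelSubobject_comp_arrow _ _ _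
  have keyL : ∀ {W : A} (w : W ⟶ M) (hw : w ≫ f = 0),
      factorThruKernelSubobject f w hw ≫ (dd.ortho φ L).arrow = w :=
    fun w hw => factorThruKernelSubobject_comp_arrow _ _ _
  -- `K^⊥` is the pullback of `ker(j^∨)` along `f`
  have hc : IsLimit (PullbackCone.mk _ _ hu.symm) := by
    refine PullbackCone.IsLimit.mk hu.symm
      (fun s => factorThruKernelSubobject (φ ≫ dd.dualMap K.arrow) s.fst ?_)
      (fun s => keyK _ _) (fun s => ?_) (fun s m hm1 hm2 => ?_)
    · rw [hg, ← Category.assoc, s.condition, Category.assoc, kernel.condition, comp_zero]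
    · exact (cancel_mono (kernel.ι (dd.dualMap j))).1 ((Category.assoc _ _ _).trans
        ((whisker_eq _ hu).trans ((Category.assoc _ _ _).symm.trans
          ((eq_whisker (keyK _ _) f).trans s.condition))))
    · exact (cancel_mono (dd.ortho φ K).arrow).1 (hm1.trans (keyK _ _).symm)
  -- `f` is an epimorphism
  haveI : Epi f := by
    haveI : Epi (dd.dualMap L.arrow) := by
      haveI : Epi (L.arrow.op) := inferInstance
      exact dd.D.map_epi L.arrow.op
    exact epi_comp φ _
  -- hence `u` is an epimorphism, being a pullback of `f`
  haveI : Epi u := by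
    have he : (IsLimit.conePointUniqueUpToIso hc
        (pullbackIsPullback f (kernel.ι (dd.dualMap j)))).hom ≫
        pullback.snd f (kernel.ι (dd.dualMap j)) = u := by
      simpa using IsLimit.conePointUniqueUpToIso_hom_comp hc
        (pullbackIsPullback f (kernel.ι (dd.dualMap j))) WalkingCospan.right
    rw [← he]
    exact @epi_comp _ _ _ _ _ _ (@IsIso.epi_of_iso _ _ _ _ _ (Iso.isIso_hom (IsLimit.conePointUniqueUpToIso hc
      (pullbackIsPullback f (kernel.ι (dd.dualMap j)))))) _
      (Abelian.epi_pullback_of_epi_f f (kernel.ι (dd.dualMap j)))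
  -- `L^⊥ ⟶ K^⊥` is a kernel of `u`
  set ol := Subobject.ofLE (dd.ortho φ L) (dd.ortho φ K) h' with holdef
  have hol : ol ≫ (dd.ortho φ K).arrow = (dd.ortho φ L).arrow := Subobject.ofLE_arrow h'
  have holu : ol ≫ u = 0 := by
    rw [← cancel_mono (kernel.ι (dd.dualMap j)), Category.assoc, hu, ← Category.assoc, hol,
      zero_comp]
    exact kernelSubobject_arrow_comp f
  have hfork : IsLimit (KernelFork.ofι ol holu) := by
    refine KernelFork.IsLimit.ofι _ _
      (fun {W'} w hw => factorThruKernelSubobject f (w ≫ (dd.ortho φ K).arrow) ?_)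
      (fun {W'} w hw => ?_) (fun {W'} w hw m hm => ?_)
    · rw [Category.assoc, ← hu, ← Category.assoc, hw, zero_comp]
    · exact (cancel_mono (dd.ortho φ K).arrow).1 ((Category.assoc _ _ _).trans
        ((whisker_eq _ hol).trans (keyL _ _)))
    · exact (cancel_mono ol).1 (hm.trans ((cancel_mono (dd.ortho φ K).arrow).1
        ((Category.assoc _ _ _).trans ((whisker_eq _ hol).trans (keyL _ _))).symm))
  -- hence `u` is a cokernel of `ol`, so `coker ol ≅ ker (j^∨)`
  have hcolim : IsColimit (CokernelCofork.ofπ u (KernelFork.condition (KernelFork.ofι ol holu))) :=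
    Abelian.epiIsCokernelOfKernel _ hfork
  have iso1 : cokernel ol ≅ kernel (dd.dualMap j) :=
    IsColimit.coconePointUniqueUpToIso (cokernelIsCokernel ol) hcolim
  -- the duality is exact, so `ker (j^∨) ≅ (coker j)^∨`
  have iso2 : kernel (dd.dualMap j) ≅ dd.dual (cokernel j) :=
    (PreservesKernel.iso dd.D j.op).symm ≪≫ dd.D.mapIso (kernelOpOp j)
  exact iso1 ≪≫ iso2
end

section
/- Let (A, ∨, ϖ) be an abelian category with duality and B ⊆ A a full subcategory closed under isomorphisms, subobjects, quotient objects, finite products, and the duality. Let (M, φ) be a hermitian space in A, and let N ≤ M be a totally isotropic subobject with N^⊥/N ∈ B which admits a finite B-filtration 0 = N₀ ≤ N₁ ≤ ⋯ ≤ N_r = N. Then the chain 0 = N₀ ≤ N₁ ≤ ⋯ ≤ N_r ≤ N_r^⊥ ≤ N_{r-1}^⊥ ≤ ⋯ ≤ N₁^⊥ ≤ N₀^⊥ = M is a B-filtration of M; in particular, M admits a finite B-filtration. -/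
open CategoryTheory CategoryTheory.Limits Opposite ZeroObject

universe v u

section Auxiliary

open CategoryTheory.Abelian CategoryTheory.Abelian.Pseudoelement

variable {A : Type u} [Category.{v} A] [Abelian A]

namespace CategoryWithDuality

variable (dd : CategoryWithDuality A)

lemma dualMap_comp {X Y Z : A} (f : X ⟶ Y) (g : Y ⟶ Z) :
    dd.dualMap (f ≫ g) = dd.dualMap g ≫ dd.dualMap f := by
  simp [dualMap, op_comp, dd.D.map_comp]
  rfl

/-- The orthogonal complement is antitone. -/
lemma ortho_antitone {M : A} (φ : M ⟶ dd.dual M) : Antitone (dd.ortho φ) := by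
  intro L L' h
  have harrow : (L : Subobject M).arrow = Subobject.ofLE L L' h ≫ L'.arrow :=
    (Subobject.ofLE_arrow h).symm
  show kernelSubobject (φ ≫ dd.dualMap L'.arrow) ≤ kernelSubobject (φ ≫ dd.dualMap L.arrow)
  have : φ ≫ dd.dualMap L.arrow
      = (φ ≫ dd.dualMap L'.arrow) ≫ dd.dualMap (Subobject.ofLE L L' h) := by
    rw [harrow, dd.dualMap_comp, Category.assoc]
  rw [this]
  exact kernelSubobject_comp_le _ _

/-- The orthogonal complement of `⊥` is everything. -/
lemma ortho_bot {M : A} (φ : M ⟶ dd.dual M) : dd.ortho φ ⊥ = ⊤ := by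
  haveI := dd.exactLim
  show kernelSubobject (φ ≫ dd.dualMap (⊥ : Subobject M).arrow) = ⊤
  have h0 : dd.dualMap (⊥ : Subobject M).arrow = 0 := by
    rw [Subobject.bot_arrow]
    show dd.D.map (0 : _ ⟶ M).op = 0
    rw [op_zero, dd.D.map_zero]
  rw [h0, comp_zero, kernelSubobject_zero]

/-- The key dévissage step: if `L ≤ L'` with `L'/L ∈ B`, then `L^⊥/L'^⊥ ∈ B`. -/
lemma ortho_quotient_mem {B : A → Prop} (hB : IsDevissageSubcat dd B)
    {M : A} (φ : M ⟶ dd.dual M) {L L' : Subobject M} (h : L ≤ L')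
    (hQ : B (cokernel (Subobject.ofLE L L' h)))
    (h' : dd.ortho φ L' ≤ dd.ortho φ L) :
    B (cokernel (Subobject.ofLE (dd.ortho φ L') (dd.ortho φ L) h')) := by
  haveI := dd.exactLim
  set e : (L : A) ⟶ (L' : A) := Subobject.ofLE L L' h with he
  set g : M ⟶ dd.dual (L' : A) := φ ≫ dd.dualMap L'.arrow with hg
  set δ : dd.dual (L' : A) ⟶ dd.dual (L : A) := dd.dualMap e with hδ
  have hOL' : dd.ortho φ L' = kernelSubobject g := rfl
  -- the composite `(ortho L).arrow ≫ g ≫ δ` vanishes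
  have hgδ : g ≫ δ = φ ≫ dd.dualMap L.arrow := by
    rw [hg, hδ, Category.assoc, ← dd.dualMap_comp, he, Subobject.ofLE_arrow]
  have w : ((dd.ortho φ L).arrow ≫ g) ≫ δ = 0 := by
    rw [Category.assoc, hgδ]
    exact kernelSubobject_arrow_comp (φ ≫ dd.dualMap L.arrow)
  set ψ : ((dd.ortho φ L : Subobject M) : A) ⟶ kernel δ :=
    kernel.lift δ ((dd.ortho φ L).arrow ≫ g) w with hψ
  have hu : Subobject.ofLE (dd.ortho φ L') (dd.ortho φ L) h' ≫ ψ = 0 := by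
    rw [← cancel_mono (kernel.ι δ), Category.assoc, hψ, kernel.lift_ι, zero_comp,
      ← Category.assoc, Subobject.ofLE_arrow]
    exact kernelSubobject_arrow_comp g
  set θ : cokernel (Subobject.ofLE (dd.ortho φ L') (dd.ortho φ L) h') ⟶ kernel δ :=
    cokernel.desc _ ψ hu with hθ
  have hmono : Mono θ := by
    apply mono_of_zero_of_map_zero
    intro a ha
    obtain ⟨x, rfl⟩ := pseudo_surjective_of_epi
      (cokernel.π (Subobject.ofLE (dd.ortho φ L') (dd.ortho φ L) h')) a
    rw [← Pseudoelement.comp_apply, hθ, cokernel.π_desc] at ha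
    -- `ha : ψ x = 0`; deduce `g ((ortho L).arrow x) = 0`
    have h1 : pseudoApply g (pseudoApply (dd.ortho φ L).arrow x) = 0 := by
      have : pseudoApply (ψ ≫ kernel.ι δ) x = 0 := by
        rw [Pseudoelement.comp_apply, ha, Pseudoelement.apply_zero]
      rw [hψ, kernel.lift_ι, Pseudoelement.comp_apply] at this
      exact this
    obtain ⟨y, hy⟩ := pseudo_exact_of_exact (ShortComplex.exact_kernel g) _ h1
    -- transport `y` along the iso `kernel g ≅ (kernelSubobject g : A)`
    set y' : Pseudoelement ((kernelSubobject g : Subobject M) : A) :=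
      pseudoApply (kernelSubobjectIso g).inv y with hy'
    have h2 : pseudoApply (kernelSubobject g).arrow y' = pseudoApply (dd.ortho φ L).arrow x := by
      rw [hy', ← Pseudoelement.comp_apply, kernelSubobject_arrow', hy]
    have h3 : pseudoApply (dd.ortho φ L).arrow
        (pseudoApply (Subobject.ofLE (dd.ortho φ L') (dd.ortho φ L) h')
          (hOL' ▸ y' : Pseudoelement ((dd.ortho φ L' : Subobject M) : A)))
        = pseudoApply (dd.ortho φ L).arrow x := by
      rw [← Pseudoelement.comp_apply, Subobject.ofLE_arrow]
      cases hOL'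
      exact h2
    have h4 := pseudo_injective_of_mono (dd.ortho φ L).arrow h3
    rw [← h4, ← Pseudoelement.comp_apply, cokernel.condition, Pseudoelement.zero_apply]
  -- identify `kernel δ` with the dual of `cokernel e`
  have hiso : dd.dual (cokernel e) ≅ kernel δ :=
    (dd.D.mapIso (kernelOpOp e)).symm ≪≫ PreservesKernel.iso dd.D e.op
  have hBQ : B (kernel δ) := hB.iso_closed hiso (hB.dual_closed hQ)
  exact hB.sub_closed θ hmono hBQ

end CategoryWithDuality

/-- Congruence for membership of successive quotients. -/
lemma B_cokernel_ofLE_congr {A : Type u} [Category.{v} A] [Abelian A] {B : A → Prop}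
    {M : A} {X Y X' Y' : Subobject M} (hXY : X ≤ Y) (hX : X = X') (hY : Y = Y')
    (h' : X' ≤ Y') (hb : B (cokernel (Subobject.ofLE X Y hXY))) :
    B (cokernel (Subobject.ofLE X' Y' h')) := by
  subst hX; subst hY; exact hb

end Auxiliary

/-- **A hermitian `B`-filtration of a totally isotropic `N` extends to a `B`-filtration of `M`.**
Let `(A, ∨, ϖ)` be an abelian category with duality, `B ⊆ A` a full subcategory closed under
isomorphisms, subobjects, quotients, finite products and duality, `(M, φ)` a hermitian space,
and `N ≤ M` a totally isotropic subobject with `N^⊥/N ∈ B` which admits a finite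
`B`-filtration `0 = N₀ ≤ N₁ ≤ ⋯ ≤ N_r = N`.  Then the doubled chain
`0 = N₀ ≤ ⋯ ≤ N_r ≤ N_r^⊥ ≤ ⋯ ≤ N₀^⊥ = M` is a `B`-filtration of `M`; in particular `M`
admits a finite `B`-filtration. -/
theorem hermitian_filtration_doubles
    (A : Type u) [Category.{v} A] [Abelian A]
    (dd : CategoryWithDuality A)
    (B : A → Prop) (hB : IsDevissageSubcat dd B)
    (M : A) (φ : M ⟶ dd.dual M) (hφ : dd.IsHermitian 1 φ)
    (N : Subobject M) (hN : dd.TotallyIsotropic φ N)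
    (hNB : B (cokernel (Subobject.ofLE N (dd.ortho φ N) hN)))
    (r : ℕ) (c : ℕ → Subobject M) (hc : Monotone c)
    (h0 : c 0 = ⊥) (htop : ∀ i, r ≤ i → c i = N)
    (hquot : ∀ i < r,
      B (cokernel (Subobject.ofLE (c i) (c (i + 1)) (hc (Nat.le_succ i))))) :
    (∃ d : ℕ → Subobject M,
      (∀ i ≤ r, d i = c i) ∧
      (∀ i, r < i → i ≤ 2 * r + 1 → d i = dd.ortho φ (c (2 * r + 1 - i))) ∧
      ∃ hd : Monotone d,
        d 0 = ⊥ ∧ d (2 * r + 1) = ⊤ ∧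
          ∀ i < 2 * r + 1,
            B (cokernel (Subobject.ofLE (d i) (d (i + 1)) (hd (Nat.le_succ i))))) ∧
    HasBFiltration B M := by
  classical
  -- the doubled chain
  set d : ℕ → Subobject M := fun i => if i ≤ r then c i else dd.ortho φ (c (2 * r + 1 - i))
    with hd_def
  have hd_le : ∀ i ≤ r, d i = c i := fun i hi => if_pos hi
  have hd_gt : ∀ i, r < i → d i = dd.ortho φ (c (2 * r + 1 - i)) := fun i hi =>
    if_neg (Nat.not_le.2 hi)
  have hcr : c r = N := htop r le_rfl
  -- monotonicity
  have hd : Monotone d := by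
    apply monotone_nat_of_le_succ
    intro i
    rcases lt_trichotomy i r with hir | hir | hir
    · rw [hd_le i hir.le, hd_le (i + 1) hir]
      exact hc (Nat.le_succ i)
    · subst hir
      rw [hd_le i le_rfl, hd_gt (i + 1) (Nat.lt_succ_self i)]
      have : 2 * i + 1 - (i + 1) = i := by omega
      rw [this, hcr]
      exact hN
    · rw [hd_gt i hir, hd_gt (i + 1) (Nat.lt_of_lt_of_le hir (Nat.le_succ i))]
      exact dd.ortho_antitone φ (hc (by omega : 2 * r + 1 - (i + 1) ≤ 2 * r + 1 - i))
  have hd0 : d 0 = ⊥ := by rw [hd_le 0 (Nat.zero_le r), h0]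
  have hdtop : d (2 * r + 1) = ⊤ := by
    rw [hd_gt (2 * r + 1) (by omega), Nat.sub_self, h0, dd.ortho_bot]
  -- the successive quotients lie in `B`
  have hdquot : ∀ i < 2 * r + 1,
      B (cokernel (Subobject.ofLE (d i) (d (i + 1)) (hd (Nat.le_succ i)))) := by
    intro i hi
    rcases lt_trichotomy i r with hir | hir | hir
    · exact B_cokernel_ofLE_congr (hc (Nat.le_succ i)) (hd_le i hir.le).symm
        (hd_le (i + 1) hir).symm _ (hquot i hir)
    · subst hir
      have h1 : d i = N := by rw [hd_le i le_rfl, hcr]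
      have h2 : d (i + 1) = dd.ortho φ N := by
        rw [hd_gt (i + 1) (Nat.lt_succ_self i)]
        congr 1
        rw [(by omega : 2 * i + 1 - (i + 1) = i), hcr]
      exact B_cokernel_ofLE_congr hN h1.symm h2.symm _ hNB
    · -- `r < i < 2r + 1`
      set j : ℕ := 2 * r - i with hj
      have hjr : j < r := by omega
      have h1 : d i = dd.ortho φ (c (j + 1)) := by
        rw [hd_gt i hir, (by omega : 2 * r + 1 - i = j + 1)]
      have h2 : d (i + 1) = dd.ortho φ (c j) := by
        rw [hd_gt (i + 1) (by omega), (by omega : 2 * r + 1 - (i + 1) = j)]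
      exact B_cokernel_ofLE_congr (dd.ortho_antitone φ (hc (Nat.le_succ j)))
        h1.symm h2.symm _
        (dd.ortho_quotient_mem hB φ (hc (Nat.le_succ j)) (hquot j hjr)
          (dd.ortho_antitone φ (hc (Nat.le_succ j))))
  refine ⟨⟨d, hd_le, fun i h1 _ => hd_gt i h1, hd, hd0, hdtop, hdquot⟩, ?_⟩
  exact ⟨2 * r + 1, d, hd, hd0, hdtop, hdquot⟩
end
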